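/- Let A_1,…,A_14 be the linear vector fields on ℝ^{11} (coordinates (X,Y,Z,U1,U2,U3,V1,V2,V3,W1,W2)) given by: A_1 = 3X∂X+3Y∂Y+2Z∂Z+2U1∂U1+2U2∂U2+U3∂U3+2V1∂V1+2V2∂V2+V3∂V3+W1∂W1+W2∂W2; A_2 = 3X∂Z−3V2∂V3+3U1∂W1+4U2∂W2; A_3 = 3Y∂Z−3U1∂U3+4V1∂W1+3V2∂W2; A_4 = 9X∂U1+3V1∂V3+3Z∂W1+2U1∂W2; A_5 = 3Y∂U1−3Z∂U3+V1∂W2; A_6 = 3X∂U2−3U2∂U3+Z∂W2; A_7 = X∂U3; A_8 = 3U2∂U3+9Y∂V2+2V2∂W1+3Z∂W2; A_9 = 3Y∂V1−3V1∂V3+Z∂W1; A_10 = 3X∂V2−3Z∂V3+U2∂W1; A_11 = 3Y∂V3+X∂W2; A_12 = X∂W1; A_13 = Y∂W1; A_14 = Y∂W2. Then for every linear form L : ℝ^{11} → ℝ, the linear span of the fifteen linear forms L∘A_1,…,L∘A_14 and L in the dual space of ℝ^{11} has dimension at most 8. -/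

import Mathlib

/-! The coordinates `U3, V3, W1, W2` (indices `5, 8, 9, 10`) occur in the coefficients of no
`Aᵢ` other than the Euler field `A₁`, where they have weight `1`. Hence every `L ∘ Aᵢ` is, up
to a multiple of `L`, a form vanishing on these four coordinate axes, and such forms make up a
`7`-dimensional space. -/

open Matrix

/-- The matrices of the linear vector fields `A₁,…,A₁₄` on `ℝ¹¹` (indexed by `Fin 14`,
index `i` corresponding to `A_{i+1}`): the linear parts at the origin of the generators
of `Lift(F'₃₃)`. Target coordinates `(X,Y,Z,U1,U2,U3,V1,V2,V3,W1,W2)` are indexed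
`0,…,10`; the entry in row `i`, column `j` is the coefficient of the `j`-th coordinate in
the `i`-th component of the vector field. -/
noncomputable def B : Fin 14 → Matrix (Fin 11) (Fin 11) ℝ
  | 0 => Matrix.diagonal ![3, 3, 2, 2, 2, 1, 2, 2, 1, 1, 1]
  | 1 => Matrix.single 2 0 3 + Matrix.single 8 7 (-3) +
      Matrix.single 9 3 3 + Matrix.single 10 4 4
  | 2 => Matrix.single 2 1 3 + Matrix.single 5 3 (-3) +
      Matrix.single 9 6 4 + Matrix.single 10 7 3
  | 3 => Matrix.single 3 0 9 + Matrix.single 8 6 3 +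
      Matrix.single 9 2 3 + Matrix.single 10 3 2
  | 4 => Matrix.single 3 1 3 + Matrix.single 5 2 (-3) +
      Matrix.single 10 6 1
  | 5 => Matrix.single 4 0 3 + Matrix.single 5 4 (-3) +
      Matrix.single 10 2 1
  | 6 => Matrix.single 5 0 1
  | 7 => Matrix.single 5 4 3 + Matrix.single 7 1 9 +
      Matrix.single 9 7 2 + Matrix.single 10 2 3
  | 8 => Matrix.single 6 1 3 + Matrix.single 8 6 (-3) +
      Matrix.single 9 2 1
  | 9 => Matrix.single 7 0 3 + Matrix.single 8 2 (-3) +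
      Matrix.single 9 4 1
  | 10 => Matrix.single 8 1 3 + Matrix.single 10 0 1
  | 11 => Matrix.single 9 0 1
  | 12 => Matrix.single 9 1 1
  | 13 => Matrix.single 10 1 1

open Module Submodule

theorem finrank_span_insert_le_finrank_add_one {K V : Type*} [Field K] [AddCommGroup V]
    [Module K V] (x : V) (S : Set V) (N : Submodule K V) [FiniteDimensional K N]
    (hS : ∀ y ∈ S, ∃ c : K, y - c • x ∈ N) :
    finrank K (span K (insert x S)) ≤ finrank K N + 1 := by
  have hspan : span K (insert x S) ≤ N ⊔ K ∙ x := by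
    rw [span_le, Set.insert_subset_iff]
    refine ⟨mem_sup_right (mem_span_singleton_self x), fun y hy => ?_⟩
    obtain ⟨c, hc⟩ := hS y hy
    have hcx : c • x ∈ N ⊔ K ∙ x := mem_sup_right (smul_mem _ c (mem_span_singleton_self x))
    simpa using add_mem (mem_sup_left hc) hcx
  calc finrank K (span K (insert x S))
      ≤ finrank K ↥(N ⊔ K ∙ x) := finrank_mono hspan
    _ ≤ finrank K N + finrank K (K ∙ x) := finrank_add_le_finrank_add_finrank N _
    _ ≤ finrank K N + 1 := by
      gcongr
      simpa using finrank_span_le_card ({x} : Set V)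

theorem LinearMap.mem_span_range_proj_of_map_single_eq_zero {K ι : Type*} [Field K] [Fintype ι]
    [DecidableEq ι] (s : Finset ι) (f : (ι → K) →ₗ[K] K)
    (hf : ∀ a ∈ s, f (Pi.single a 1) = 0) :
    f ∈ span K
      (Set.range fun j : ↥sᶜ => LinearMap.proj (R := K) (φ := fun _ => K) (j : ι)) := by
  have hf_eq : f = ∑ j, f (Pi.single j 1) • LinearMap.proj j := by
    ext x
    simp [Pi.single_apply]
  rw [hf_eq]
  refine sum_mem fun j _ => ?_
  by_cases hj : j ∈ s
  · simp [hf j hj]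
  · exact smul_mem _ _ (subset_span ⟨⟨j, by simpa using hj⟩, rfl⟩)

theorem B_mulVec_single_eq_ite_smul (i : Fin 14) {a : Fin 11}
    (ha : a ∈ ({5, 8, 9, 10} : Finset (Fin 11))) :
    (B i).mulVec (Pi.single a 1) = (if i = 0 then 1 else 0 : ℝ) • Pi.single a 1 := by
  simp only [Finset.mem_insert, Finset.mem_singleton] at ha
  rcases ha with rfl | rfl | rfl | rfl <;> fin_cases i <;> ext r <;> fin_cases r <;>
    simp [B, Matrix.single]

/-- For every linear form `L : ℝ¹¹ → ℝ`, the span of the fifteen linear forms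
`L∘A₁, …, L∘A₁₄, L` in the dual of `ℝ¹¹` has dimension at most `8`. This rank bound shows
that every hyperplane section of `F'₃₃` has `𝒜ₑ`-codimension greater than `2`. -/
theorem span_L_comp_liftF33'_linear_parts_le_eight :
    ∀ L : (Fin 11 → ℝ) →ₗ[ℝ] ℝ,
      Module.finrank ℝ
        (Submodule.span ℝ
          (insert L (Set.range fun i : Fin 14 => L ∘ₗ (B i).mulVecLin))) ≤ 8 := by
  intro L
  set s : Finset (Fin 11) := {5, 8, 9, 10}
  set N := span ℝ
    (Set.range fun j : ↥sᶜ => LinearMap.proj (R := ℝ) (φ := fun _ => ℝ) (j : Fin 11))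
  have hN : finrank ℝ N ≤ 7 :=
    (finrank_range_le_card _).trans (by rw [Fintype.card_coe, Finset.card_compl]; decide)
  have hB : ∀ y ∈ Set.range fun i : Fin 14 => L ∘ₗ (B i).mulVecLin,
      ∃ c : ℝ, y - c • L ∈ N := by
    rintro _ ⟨i, rfl⟩
    refine ⟨if i = 0 then 1 else 0,
      LinearMap.mem_span_range_proj_of_map_single_eq_zero s _ fun a ha => ?_⟩
    rw [LinearMap.sub_apply, LinearMap.comp_apply, Matrix.mulVecLin_apply,
      B_mulVec_single_eq_ite_smul i ha, map_smul, LinearMap.smul_apply, sub_self]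
  exact (finrank_span_insert_le_finrank_add_one L _ N hB).trans (by omega)
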